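/- If Σ_{n≥1} sup_{x∈(0,1)} e^{w(φ_n(x))} < ∞ (in particular, under hypothesis (H7)), then v(0) ≤ 0, where v(0) denotes the value at 0 of the C^k extension of v|_{J_0} to [0,a]. -/

import Mathlib

open Set Filter Topology Asymptotics MeasureTheory

noncomputable section

/-- The first passage time of `x` to the interval `(a,1)` under iteration of `T`
(`τ(x) = min {n ≥ 0 : Tⁿ x ∈ (a,1)}`). -/
def tau (T : ℝ → ℝ) (a : ℝ) (x : ℝ) : ℕ := sInf {n : ℕ | T^[n] x ∈ Set.Ioo a 1}

/-- The jump transformation `G(x) = T^{1+τ(x)}(x)` of `T` on `(a,1)`. -/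
def Gmap (T : ℝ → ℝ) (a : ℝ) (x : ℝ) : ℝ := T^[1 + tau T a x] x

/-- The sequence `a₀ = 1`, `a₁ = a`, `a_ℓ = ψ₀(a_{ℓ-1})`. -/
def aseq (ψ₀ : ℝ → ℝ) (a : ℝ) : ℕ → ℝ
  | 0 => 1
  | 1 => a
  | n + 2 => ψ₀ (aseq ψ₀ a (n + 1))

/-- The level sets `A_ℓ = (a_ℓ, a_{ℓ-1})` of the first passage function. -/
def Aset (ψ₀ : ℝ → ℝ) (a : ℝ) (ℓ : ℕ) : Set ℝ := Set.Ioo (aseq ψ₀ a ℓ) (aseq ψ₀ a (ℓ - 1))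

/-- The inverse branches `φ_ℓ = ψ₀^{ℓ-1} ∘ ψ₁` of the jump transformation. -/
def phib (ψ₀ ψ₁ : ℝ → ℝ) (ℓ : ℕ) : ℝ → ℝ := ψ₀^[ℓ - 1] ∘ ψ₁

/-- The induced potential `w(x) = ∑_{j=0}^{τ(x)} v(Tʲ x)`. -/
def indw (T : ℝ → ℝ) (a : ℝ) (v : ℝ → ℝ) (x : ℝ) : ℝ :=
  ∑ j ∈ Finset.range (tau T a x + 1), v (T^[j] x)

/-- The `C^h` norm `‖f‖_h = max_{0 ≤ j ≤ h} sup_{[0,1]} |f^{(j)}|` of a function on `[0,1]`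
(computed via the open interval `(0,1)`). -/
noncomputable def nrm {E : Type*} [NormedAddCommGroup E] [NormedSpace ℝ E]
    (h : ℕ) (f : ℝ → E) : ℝ :=
  (Finset.range (h + 1)).sup' Finset.nonempty_range_add_one fun j =>
    sSup ((fun x => ‖iteratedDerivWithin j f (Set.Ioo (0 : ℝ) 1) x‖) '' Set.Ioo (0 : ℝ) 1)

/-- Hypotheses (H1)–(H5) on the parabolic map `T`. -/
structure Hyp (T : ℝ → ℝ) (a : ℝ) (ψ₀ ψ₁ : ℝ → ℝ) (r : ℕ∞) (c α ε ρ : ℝ) : Prop where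
  ha : a ∈ Set.Ioo (0 : ℝ) 1
  hmaps : Set.MapsTo T (Set.Icc 0 1) (Set.Icc 0 1)
  mono0 : StrictMonoOn T (Set.Ioo 0 a)
  mono1 : StrictMonoOn T (Set.Ioo a 1) ∨ StrictAntiOn T (Set.Ioo a 1)
  full0 : closure (T '' Set.Ioo 0 a) = Set.Icc 0 1
  full1 : closure (T '' Set.Ioo a 1) = Set.Icc 0 1
  hr : 2 ≤ r
  smooth0 : ContDiffOn ℝ r T (Set.Ioc 0 a)
  smooth1 : ContDiffOn ℝ r T (Set.Icc a 1)
  inv0 : ∀ y ∈ Set.Ioo (0 : ℝ) 1, ψ₀ y ∈ Set.Ioo 0 a ∧ T (ψ₀ y) = y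
  inv0' : ∀ x ∈ Set.Ioo 0 a, ψ₀ (T x) = x
  inv1 : ∀ y ∈ Set.Ioo (0 : ℝ) 1, ψ₁ y ∈ Set.Ioo a 1 ∧ T (ψ₁ y) = y
  inv1' : ∀ x ∈ Set.Ioo a 1, ψ₁ (T x) = x
  hc : 0 < c
  hα : 0 < α
  fix0 : T 0 = 0
  dT0 : derivWithin T (Set.Icc 0 1) 0 = 1
  asymp : Filter.Tendsto (fun x => (deriv T x - 1) / (c * x ^ α)) (nhdsWithin 0 (Set.Ioi 0)) (nhds 1)
  hε : 0 < ε
  hρ : 1 < ρ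
  dmono : StrictMonoOn (deriv T) (Set.Ioo 0 ε)
  expand : ∀ x ∈ Set.Ico ε a ∪ Set.Ioo a 1, ρ ≤ |deriv T x|

/-- Hypothesis (H6) on the potential `v`: it is `C^k` on each branch interval and extends
to a `C^k` function on `[0,a]` and on `[a,1]`; `v 0` is declared to be the value at `0`
of the extension to `[0,a]`. -/
structure HypV (a : ℝ) (v : ℝ → ℝ) (k : ℕ∞) : Prop where
  ext0 : ∃ v0 : ℝ → ℝ, ContDiffOn ℝ k v0 (Set.Icc 0 a) ∧ Set.EqOn v v0 (Set.Ioo 0 a) ∧ v 0 = v0 0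
  ext1 : ∃ v1 : ℝ → ℝ, ContDiffOn ℝ k v1 (Set.Icc a 1) ∧ Set.EqOn v v1 (Set.Ioo a 1)

/-- Hypothesis (H7): `∑_n ‖e^{w∘φ_n}‖_h (1 + ‖φ_n‖_h^h) ≤ c_k` for all `h ≤ k`. -/
def H7 (T : ℝ → ℝ) (a : ℝ) (ψ₀ ψ₁ v : ℝ → ℝ) (k : ℕ) (ck : ℝ) : Prop :=
  ∀ h : ℕ, h ≤ k →
    Summable (fun n : ℕ =>
      nrm h (fun x => Real.exp (indw T a v (phib ψ₀ ψ₁ (n + 1) x))) *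
        (1 + nrm h (phib ψ₀ ψ₁ (n + 1)) ^ h)) ∧
    (∑' n : ℕ,
      nrm h (fun x => Real.exp (indw T a v (phib ψ₀ ψ₁ (n + 1) x))) *
        (1 + nrm h (phib ψ₀ ψ₁ (n + 1)) ^ h)) ≤ ck

/-- Composition `φ_β = φ_{β₁} ∘ ⋯ ∘ φ_{β_m}` along a list `β` of branch indices. -/
def phibList (ψ₀ ψ₁ : ℝ → ℝ) : List ℕ → ℝ → ℝ
  | [], x => x
  | n :: l, x => phib ψ₀ ψ₁ n (phibList ψ₀ ψ₁ l x)

/-- The weight `W_β(x) = exp (∑_{j=1}^m w(φ_{β_j  … β_m}(x)))`. -/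
def Wb (T : ℝ → ℝ) (a : ℝ) (ψ₀ ψ₁ v : ℝ → ℝ) : List ℕ → ℝ → ℝ
  | [], _ => 1
  | n :: l, x =>
      Real.exp (indw T a v (phib ψ₀ ψ₁ n (phibList ψ₀ ψ₁ l x))) * Wb T a ψ₀ ψ₁ v l x

/-- `Λ_m(z) = sup_{x ∈ (0,1)} ∑_{β ∈ ℕ_{≥1}^m} |z|^{|β|} W_β(x)`, as a function of `|z|`. -/
noncomputable def Lam (T : ℝ → ℝ) (a : ℝ) (ψ₀ ψ₁ v : ℝ → ℝ) (m : ℕ) (zn : ℝ) : ℝ :=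
  sSup ((fun x => ∑' β : Fin m → ℕ,
      zn ^ (m + ∑ i, β i) * Wb T a ψ₀ ψ₁ v (List.ofFn fun i => β i + 1) x) '' Set.Ioo (0 : ℝ) 1)

/-!
Suppose `v 0 > 0`. The backward orbit `yᵢ = ψ₀ⁱ (ψ₁ a)` of the point `ψ₁ a` decreases to the
neutral fixed point `0`, because `T x > x` on `(0, a)` (as `T' > 1` there and `T 0 = 0`). Since
`w (φ_{n+1} a) = ∑_{i ≤ n} v yᵢ` and `v yᵢ → v 0 > 0`, these partial sums are eventually
nondecreasing, so `exp (w (φ_{n+1} a))` does not tend to `0`. But it is bounded by the `n`-th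
term of the summable series (the suprema are finite since `v` is bounded above), a contradiction.
-/

theorem not_tendsto_sum_range_atBot_of_eventually_nonneg {u : ℕ → ℝ}
    (hu : ∀ᶠ i in atTop, 0 ≤ u i) :
    ¬ Tendsto (fun n => ∑ i ∈ Finset.range n, u i) atTop atBot := by
  intro h
  obtain ⟨N, hN⟩ := eventually_atTop.mp hu
  have hmono : ∀ n ≥ N, ∑ i ∈ Finset.range N, u i ≤ ∑ i ∈ Finset.range n, u i := fun n hn =>
    Finset.sum_le_sum_of_subset_of_nonneg (Finset.range_subset_range.mpr hn) fun i _ hi =>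
      hN i (by simpa using hi)
  obtain ⟨n, hn, hlt⟩ :=
    ((eventually_ge_atTop N).and (tendsto_atBot.mp h (∑ i ∈ Finset.range N, u i - 1))).exists
  linarith [hmono n hn]

namespace Hyp

variable {T : ℝ → ℝ} {a : ℝ} {ψ₀ ψ₁ : ℝ → ℝ} {r : ℕ∞} {c α ε ρ : ℝ}

theorem differentiableAt (hT : Hyp T a ψ₀ ψ₁ r c α ε ρ) {x : ℝ} (hx : x ∈ Ioo 0 a) :
    DifferentiableAt ℝ T x := by
  have hr : (1 : WithTop ℕ∞) ≤ r := by exact_mod_cast (by norm_num : (1 : ℕ∞) ≤ 2).trans hT.hr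
  exact ((hT.smooth0.mono Ioo_subset_Ioc_self).differentiableOn (by positivity)).differentiableAt
    (isOpen_Ioo.mem_nhds hx)

theorem continuousOn_Icc_zero (hT : Hyp T a ψ₀ ψ₁ r c α ε ρ) : ContinuousOn T (Icc 0 a) := by
  intro x hx
  rcases hx.1.eq_or_lt with rfl | hx0
  · have hdiff : DifferentiableWithinAt ℝ T (Icc 0 1) 0 :=
      differentiableWithinAt_of_derivWithin_ne_zero (by rw [hT.dT0]; exact one_ne_zero)
    exact hdiff.continuousWithinAt.mono (Icc_subset_Icc_right hT.ha.2.le)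
  · exact (hT.smooth0.continuousOn x ⟨hx0, hx.2⟩).mono_of_mem_nhdsWithin
      (mem_nhdsWithin.mpr ⟨Ioi 0, isOpen_Ioi, hx0, fun y hy => ⟨hy.1, hy.2.2⟩⟩)

theorem one_lt_deriv (hT : Hyp T a ψ₀ ψ₁ r c α ε ρ) {x : ℝ} (hx : x ∈ Ioo 0 a) :
    1 < deriv T x := by
  rcases lt_or_ge x ε with hxε | hεx
  · -- by (H4) there are points `z ∈ (0, x)` with `T' z > 1`, and `T'` increases on `(0, ε)`
    have hev : ∀ᶠ z in 𝓝[>] 0, 0 < (deriv T z - 1) / (c * z ^ α) :=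
      hT.asymp.eventually (eventually_gt_nhds one_pos)
    obtain ⟨z, hz, hzx⟩ := (hev.and (Ioo_mem_nhdsGT hx.1)).exists
    have hcz : 0 < c * z ^ α := mul_pos hT.hc (Real.rpow_pos_of_pos hzx.1 α)
    have hz1 : 1 < deriv T z := by linarith [(div_pos_iff_of_pos_right hcz).mp hz]
    exact hz1.trans (hT.dmono ⟨hzx.1, hzx.2.trans hxε⟩ ⟨hx.1, hxε⟩ hzx.2)
  · have hnonneg : 0 ≤ deriv T x := by
      rw [← derivWithin_of_isOpen isOpen_Ioo hx]
      exact hT.mono0.monotoneOn.derivWithin_nonneg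
    calc 1 < ρ := hT.hρ
      _ ≤ |deriv T x| := hT.expand x (Or.inl ⟨hεx, hx.2⟩)
      _ = deriv T x := abs_of_nonneg hnonneg

theorem lt_apply_self (hT : Hyp T a ψ₀ ψ₁ r c α ε ρ) {x : ℝ} (hx : x ∈ Ioo 0 a) : x < T x := by
  have hsub : Icc 0 x ⊆ Icc 0 a := Icc_subset_Icc_right hx.2.le
  have hslope := (convex_Icc 0 x).mul_sub_lt_image_sub_of_lt_deriv
    (hT.continuousOn_Icc_zero.mono hsub)
    (fun t ht => (hT.differentiableAt (Ioo_subset_Ioo_right hx.2.le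
      (by rwa [interior_Icc] at ht))).differentiableWithinAt)
    (fun t ht => hT.one_lt_deriv (Ioo_subset_Ioo_right hx.2.le (by rwa [interior_Icc] at ht)))
    0 (left_mem_Icc.mpr hx.1.le) x (right_mem_Icc.mpr hx.1.le) hx.1
  simpa [hT.fix0] using hslope

theorem psi0_mem (hT : Hyp T a ψ₀ ψ₁ r c α ε ρ) {y : ℝ} (hy : y ∈ Ioo 0 1) : ψ₀ y ∈ Ioo 0 a :=
  (hT.inv0 y hy).1

theorem iterate_psi0_mem_Ioo (hT : Hyp T a ψ₀ ψ₁ r c α ε ρ) {y : ℝ} (hy : y ∈ Ioo 0 1) :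
    ∀ i, ψ₀^[i] y ∈ Ioo (0 : ℝ) 1
  | 0 => hy
  | i + 1 => by
    rw [Function.iterate_succ_apply']
    exact Ioo_subset_Ioo_right hT.ha.2.le (hT.psi0_mem (hT.iterate_psi0_mem_Ioo hy i))

theorem iterate_succ_psi0_mem (hT : Hyp T a ψ₀ ψ₁ r c α ε ρ) {y : ℝ} (hy : y ∈ Ioo 0 1)
    (i : ℕ) : ψ₀^[i + 1] y ∈ Ioo 0 a := by
  rw [Function.iterate_succ_apply']
  exact hT.psi0_mem (hT.iterate_psi0_mem_Ioo hy i)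

theorem psi1_mem (hT : Hyp T a ψ₀ ψ₁ r c α ε ρ) {x : ℝ} (hx : x ∈ Ioo 0 1) :
    ψ₁ x ∈ Ioo (0 : ℝ) 1 :=
  ⟨hT.ha.1.trans (hT.inv1 x hx).1.1, (hT.inv1 x hx).1.2⟩

theorem iterate_psi0_psi1_mem (hT : Hyp T a ψ₀ ψ₁ r c α ε ρ) {x : ℝ} (hx : x ∈ Ioo 0 1) :
    ∀ i, ψ₀^[i] (ψ₁ x) ∈ Ioo 0 a ∪ Ioo a 1
  | 0 => Or.inr (hT.inv1 x hx).1
  | i + 1 => Or.inl (hT.iterate_succ_psi0_mem (hT.psi1_mem hx) i)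

theorem iterate_T_iterate_psi0 (hT : Hyp T a ψ₀ ψ₁ r c α ε ρ) {y : ℝ} (hy : y ∈ Ioo 0 1)
    (i : ℕ) : ∀ j, T^[j] (ψ₀^[j + i] y) = ψ₀^[i] y
  | 0 => by simp
  | j + 1 => by
    rw [Function.iterate_succ_apply, Nat.add_right_comm, Function.iterate_succ_apply',
      (hT.inv0 _ (hT.iterate_psi0_mem_Ioo hy _)).2, hT.iterate_T_iterate_psi0 hy i j]

theorem tau_phib (hT : Hyp T a ψ₀ ψ₁ r c α ε ρ) {x : ℝ} (hx : x ∈ Ioo 0 1) (n : ℕ) :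
    tau T a (phib ψ₀ ψ₁ (n + 1) x) = n := by
  have hy := hT.psi1_mem hx
  refine IsLeast.csInf_eq ⟨?_, fun m hm => ?_⟩
  · show T^[n] (ψ₀^[n + 0] (ψ₁ x)) ∈ Ioo a 1
    rw [hT.iterate_T_iterate_psi0 hy 0 n]
    exact (hT.inv1 x hx).1
  · by_contra! hmn
    obtain ⟨i, rfl⟩ : ∃ i, n = m + (i + 1) := ⟨n - m - 1, by omega⟩
    have hmem : T^[m] (ψ₀^[m + (i + 1)] (ψ₁ x)) ∈ Ioo a 1 := hm
    rw [hT.iterate_T_iterate_psi0 hy] at hmem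
    exact (hT.iterate_succ_psi0_mem hy i).2.not_gt hmem.1

theorem indw_phib (hT : Hyp T a ψ₀ ψ₁ r c α ε ρ) (v : ℝ → ℝ) {x : ℝ} (hx : x ∈ Ioo 0 1)
    (n : ℕ) :
    indw T a v (phib ψ₀ ψ₁ (n + 1) x) = ∑ i ∈ Finset.range (n + 1), v (ψ₀^[i] (ψ₁ x)) := by
  have hy := hT.psi1_mem hx
  have horbit : ∀ j ∈ Finset.range (n + 1),
      v (T^[j] (phib ψ₀ ψ₁ (n + 1) x)) = v (ψ₀^[n + 1 - 1 - j] (ψ₁ x)) := by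
    intro j hj
    obtain ⟨i, rfl⟩ : ∃ i, n = j + i := ⟨n - j, by simp at hj; omega⟩
    simp [phib, hT.iterate_T_iterate_psi0 hy]
  rw [indw, hT.tau_phib hx, Finset.sum_congr rfl horbit,
    Finset.sum_range_reflect (fun i => v (ψ₀^[i] (ψ₁ x)))]

theorem indw_phib_le (hT : Hyp T a ψ₀ ψ₁ r c α ε ρ) {v : ℝ → ℝ} {M : ℝ}
    (hM : ∀ z ∈ Ioo 0 a ∪ Ioo a 1, v z ≤ M) {x : ℝ} (hx : x ∈ Ioo 0 1) (n : ℕ) :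
    indw T a v (phib ψ₀ ψ₁ (n + 1) x) ≤ (n + 1) * M := by
  rw [hT.indw_phib v hx]
  calc ∑ i ∈ Finset.range (n + 1), v (ψ₀^[i] (ψ₁ x))
      ≤ ∑ _i ∈ Finset.range (n + 1), M :=
        Finset.sum_le_sum fun i _ => hM _ (hT.iterate_psi0_psi1_mem hx i)
    _ = (n + 1) * M := by simp

theorem tendsto_iterate_psi0 (hT : Hyp T a ψ₀ ψ₁ r c α ε ρ) {y : ℝ} (hy : y ∈ Ioo 0 1) :
    Tendsto (fun i => ψ₀^[i] y) atTop (𝓝[Ioo 0 a] 0) := by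
  set u : ℕ → ℝ := fun i => ψ₀^[i + 1] y
  have hu : ∀ i, u i ∈ Ioo 0 a := hT.iterate_succ_psi0_mem hy
  have hTu : ∀ i, T (u (i + 1)) = u i := fun i => by
    simp only [u, Function.iterate_succ_apply' ψ₀ (i + 1)]
    exact (hT.inv0 _ (hT.iterate_psi0_mem_Ioo hy (i + 1))).2
  have hanti : Antitone u := antitone_nat_of_succ_le fun i => by
    simpa [hTu i] using (hT.lt_apply_self (hu (i + 1))).le
  have hbdd : BddBelow (range u) := ⟨0, by rintro _ ⟨i, rfl⟩; exact (hu i).1.le⟩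
  set L := ⨅ i, u i
  have hlim : Tendsto u atTop (𝓝 L) := tendsto_atTop_ciInf hanti hbdd
  -- a positive limit would be a fixed point of `T` in `(0, a)`, where `T x > x`
  have hL : L = 0 := by
    by_contra hL0
    have hLmem : L ∈ Ioo 0 a :=
      ⟨(le_ciInf fun i => (hu i).1.le).lt_of_ne' hL0, (ciInf_le hbdd 0).trans_lt (hu 0).2⟩
    have hTL : Tendsto (fun i => T (u (i + 1))) atTop (𝓝 (T L)) :=
      ((hT.differentiableAt hLmem).continuousAt.tendsto).comp
        ((tendsto_add_atTop_iff_nat 1).mpr hlim)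
    simp only [hTu] at hTL
    exact (hT.lt_apply_self hLmem).ne (tendsto_nhds_unique hlim hTL)
  rw [hL] at hlim
  exact (tendsto_add_atTop_iff_nat 1).mp
    (tendsto_nhdsWithin_iff.mpr ⟨hlim, Eventually.of_forall hu⟩)

end Hyp

namespace HypV

variable {a : ℝ} {v : ℝ → ℝ} {k : ℕ∞}

theorem exists_upper_bound (hv : HypV a v k) : ∃ M, ∀ z ∈ Ioo 0 a ∪ Ioo a 1, v z ≤ M := by
  obtain ⟨v0, hv0c, hv0e, -⟩ := hv.ext0
  obtain ⟨v1, hv1c, hv1e⟩ := hv.ext1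
  obtain ⟨M0, hM0⟩ := isCompact_Icc.bddAbove_image hv0c.continuousOn
  obtain ⟨M1, hM1⟩ := isCompact_Icc.bddAbove_image hv1c.continuousOn
  refine ⟨max M0 M1, fun z hz => ?_⟩
  rcases hz with hz | hz
  · rw [hv0e hz]
    exact (hM0 (mem_image_of_mem _ (Ioo_subset_Icc_self hz))).trans (le_max_left _ _)
  · rw [hv1e hz]
    exact (hM1 (mem_image_of_mem _ (Ioo_subset_Icc_self hz))).trans (le_max_right _ _)

theorem tendsto_zero (hv : HypV a v k) (ha : 0 ≤ a) : Tendsto v (𝓝[Ioo 0 a] 0) (𝓝 (v 0)) := by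
  obtain ⟨v0, hv0c, hv0e, hv00⟩ := hv.ext0
  rw [hv00]
  exact ((hv0c.continuousOn 0 (left_mem_Icc.mpr ha)).mono Ioo_subset_Icc_self).tendsto.congr'
    (eventuallyEq_nhdsWithin_of_eqOn hv0e.symm)

end HypV

theorem statement5_general (T : ℝ → ℝ) (a : ℝ) (ψ₀ ψ₁ : ℝ → ℝ) (r : ℕ∞) (c α ε ρ : ℝ)
    (hT : Hyp T a ψ₀ ψ₁ r c α ε ρ) (v : ℝ → ℝ) (k : ℕ∞) (hv : HypV a v k)
    (hsum : Summable (fun n : ℕ =>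
      sSup ((fun x => Real.exp (indw T a v (phib ψ₀ ψ₁ (n + 1) x))) '' Set.Ioo (0 : ℝ) 1))) :
    v 0 ≤ 0 := by
  by_contra! hv0
  obtain ⟨M, hM⟩ := hv.exists_upper_bound
  set S : ℕ → ℝ := fun n => ∑ i ∈ Finset.range n, v (ψ₀^[i] (ψ₁ a))
  have hterm : ∀ᶠ i in atTop, 0 ≤ v (ψ₀^[i] (ψ₁ a)) :=
    ((hv.tendsto_zero hT.ha.1.le).comp (hT.tendsto_iterate_psi0 (hT.psi1_mem hT.ha))).eventually
      (eventually_ge_nhds hv0)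
  have hle : ∀ n, Real.exp (S (n + 1)) ≤
      sSup ((fun x => Real.exp (indw T a v (phib ψ₀ ψ₁ (n + 1) x))) '' Ioo (0 : ℝ) 1) := by
    intro n
    simp only [S, ← hT.indw_phib v hT.ha]
    refine le_csSup ⟨Real.exp ((n + 1) * M), ?_⟩ (mem_image_of_mem _ hT.ha)
    rintro _ ⟨x, hx, rfl⟩
    exact Real.exp_le_exp.mpr (hT.indw_phib_le hM hx n)
  have hexp : Tendsto (fun n => Real.exp (S (n + 1))) atTop (𝓝 0) :=
    squeeze_zero (fun n => (Real.exp_pos _).le) hle hsum.tendsto_atTop_zero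
  rw [Real.tendsto_exp_comp_nhds_zero, tendsto_add_atTop_iff_nat 1] at hexp
  exact not_tendsto_sum_range_atBot_of_eventually_nonneg hterm hexp

/-- Remark 2.4: if `∑_{n ≥ 1} sup_{x ∈ (0,1)} e^{w(φ_n(x))} < ∞` (in particular under (H7)),
then `v(0) ≤ 0`, where `v(0)` is the value at `0` of the `C^k` extension of `v|_{J₀}` to `[0,a]`. -/
theorem statement5 (T : ℝ → ℝ) (a : ℝ) (ψ₀ ψ₁ : ℝ → ℝ) (r : ℕ∞) (c α ε ρ : ℝ)
    (hT : Hyp T a ψ₀ ψ₁ r c α ε ρ) (v : ℝ → ℝ) (k : ℕ∞) (hk : k < r) (hv : HypV a v k)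
    (hsum : Summable (fun n : ℕ =>
      sSup ((fun x => Real.exp (indw T a v (phib ψ₀ ψ₁ (n + 1) x))) '' Set.Ioo (0 : ℝ) 1))) :
    v 0 ≤ 0 :=
  statement5_general T a ψ₀ ψ₁ r c α ε ρ hT v k hv hsum

end
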